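/- arXiv:2512.15575 — 2 statements merged into one kernel-verified Lean document; each statement's English description precedes it below -/
import Mathlib

section
/- Let p be a prime. Define ψ : ℚ_p × ℤ_p² → ℤ_p² as follows: for g ∈ ℚ_p write g = ⌊g⌋ + a/p^n with ⌊g⌋ ∈ ℤ_p, n ∈ ℕ, a ∈ {0,…,p^n−1}; given (x,y) ∈ ℤ_p², set b = f_n(y) (the integer given by the last n base-p digits of y) and c = a + r_n(b) (r_n reverses n base-p digits); if c < p^n set ψ(g,(x,y)) = (x + ⌊g⌋, y − b + r_n(c)), and if p^n ≤ c < 2p^n set ψ(g,(x,y)) = (x + ⌊g⌋ + 1, y − b + r_n(c − p^n)). Then ψ is well defined: the result does not depend on the choice of n with p^n g ∈ ℤ_p (up to the canonical decomposition). -/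
open scoped Classical

/-- Reversal of the base-`p` digit string of length `n`. -/
def rev (p n a : ℕ) : ℕ := ∑ i ∈ Finset.range n, (a / p ^ (n - 1 - i) % p) * p ^ i

/-- The result of applying the digit-reversal map, given the decomposition
`g = z + a / p^n` of the acting group element. -/
noncomputable def psiOut (p : ℕ) [Fact p.Prime] (n : ℕ) (z : ℤ_[p]) (a : ℕ)
    (m : ℤ_[p] × ℤ_[p]) : ℤ_[p] × ℤ_[p] :=
  let b := m.2.appr n
  let c := a + rev p n b
  if c < p ^ n then (m.1 + z, m.2 - (b : ℤ_[p]) + (rev p n c : ℤ_[p]))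
  else (m.1 + z + 1, m.2 - (b : ℤ_[p]) + (rev p n (c - p ^ n) : ℤ_[p]))

/-- The digit-reversal action of `(ℚ_p, +)` on `ℤ_p²`. -/
noncomputable def psi (p : ℕ) [Fact p.Prime] (g : ℚ_[p]) (m : ℤ_[p] × ℤ_[p]) :
    ℤ_[p] × ℤ_[p] :=
  if h : ∃ n : ℕ, ∃ z : ℤ_[p], ∃ a : ℕ, a < p ^ n ∧
      g = (z : ℚ_[p]) + (a : ℚ_[p]) / (p : ℚ_[p]) ^ n then
    psiOut p h.choose h.choose_spec.choose h.choose_spec.choose_spec.choose m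
  else m

section Digits
variable {p : ℕ}

lemma sum_digit_lt (hp : 0 < p) (n : ℕ) (f : ℕ → ℕ) (hf : ∀ i, f i < p) :
    ∑ i ∈ Finset.range n, f i * p ^ i < p ^ n := by
  induction n with
  | zero => simp
  | succ n ih =>
    rw [Finset.sum_range_succ]
    calc (∑ i ∈ Finset.range n, f i * p ^ i) + f n * p ^ n
        < p ^ n + f n * p ^ n := Nat.add_lt_add_right ih _
      _ = (1 + f n) * p ^ n := by ring
      _ ≤ p * p ^ n := Nat.mul_le_mul_right _ (by have := hf n; omega)
      _ = p ^ (n + 1) := by ring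

lemma rev_lt (hp : 0 < p) (n a : ℕ) : rev p n a < p ^ n :=
  sum_digit_lt hp n _ (fun _ => Nat.mod_lt _ hp)

lemma digit_sum_div_mod (hp : 0 < p) (d : ℕ) (f : ℕ → ℕ) (hf : ∀ i, f i < p)
    {j : ℕ} (hj : j < d) :
    (∑ i ∈ Finset.range d, f i * p ^ i) / p ^ j % p = f j := by
  obtain ⟨e, rfl⟩ : ∃ e, d = (j + 1) + e := ⟨d - (j+1), by omega⟩
  rw [Finset.sum_range_add, Finset.sum_range_succ]
  have h1 : ∑ i ∈ Finset.range e, f (j + 1 + i) * p ^ (j + 1 + i)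
      = (∑ i ∈ Finset.range e, f (j + 1 + i) * p ^ i) * p ^ (j+1) := by
    rw [Finset.sum_mul]
    exact Finset.sum_congr rfl fun i _ => by ring
  rw [h1]
  set L := ∑ i ∈ Finset.range j, f i * p ^ i with hL
  have hLlt : L < p ^ j := sum_digit_lt hp j f hf
  set H := ∑ i ∈ Finset.range e, f (j + 1 + i) * p ^ i
  have : L + f j * p ^ j + H * p ^ (j + 1) = L + (f j + H * p) * p ^ j := by ring
  rw [this, Nat.add_mul_div_right _ _ (pow_pos hp j), Nat.div_eq_of_lt hLlt,
    zero_add, Nat.add_mul_mod_self_right, Nat.mod_eq_of_lt (hf j)]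

lemma sum_digits_eq_mod (hp : 0 < p) (d t : ℕ) :
    ∑ i ∈ Finset.range d, (t / p ^ i % p) * p ^ i = t % p ^ d := by
  induction d with
  | zero => simp [Nat.mod_one]
  | succ d ih => rw [Finset.sum_range_succ, ih, Nat.mod_pow_succ]; ring

lemma rev_rev (hp : 0 < p) (d t : ℕ) (ht : t < p ^ d) : rev p d (rev p d t) = t := by
  unfold rev
  have h : ∀ i ∈ Finset.range d,
      ((∑ j ∈ Finset.range d, (t / p ^ (d - 1 - j) % p) * p ^ j) / p ^ (d - 1 - i) % p) * p ^ i
      = (t / p ^ i % p) * p ^ i := by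
    intro i hi
    rw [Finset.mem_range] at hi
    rw [digit_sum_div_mod hp d _ (fun j => Nat.mod_lt _ hp) (by omega)]
    have he : d - 1 - (d - 1 - i) = i := by omega
    rw [he]
  rw [Finset.sum_congr rfl h, sum_digits_eq_mod hp, Nat.mod_eq_of_lt ht]

lemma rev_shift (hp : 0 < p) (n d b t : ℕ) (hb : b < p ^ n) :
    rev p (n + d) (b + t * p ^ n) = rev p d t + p ^ d * rev p n b := by
  have hpn : 0 < p ^ n := pow_pos hp n
  unfold rev
  rw [show n + d = d + n from add_comm n d, Finset.sum_range_add, Finset.mul_sum]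
  congr 1
  · apply Finset.sum_congr rfl
    intro i hi
    rw [Finset.mem_range] at hi
    have he : d + n - 1 - i = (d - 1 - i) + n := by omega
    rw [he, pow_add, mul_comm (p ^ (d - 1 - i)) (p ^ n), ← Nat.div_div_eq_div_mul,
      Nat.add_mul_div_right b t hpn, Nat.div_eq_of_lt hb, zero_add]
  · apply Finset.sum_congr rfl
    intro i hi
    rw [Finset.mem_range] at hi
    have he : d + n - 1 - (d + i) = n - 1 - i := by omega
    have hsplit : b + t * p ^ n = b + (t * p ^ (i + 1)) * p ^ (n - 1 - i) := by
      rw [mul_assoc, ← pow_add, show i + 1 + (n - 1 - i) = n from by omega]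
    have hpi : 0 < p ^ (n - 1 - i) := pow_pos hp _
    rw [he, hsplit, Nat.add_mul_div_right _ _ hpi,
      show t * p ^ (i + 1) = (t * p ^ i) * p by ring, Nat.add_mul_mod_self_right,
      pow_add]
    ring

lemma rev_key (hp : 0 < p) (n d c t : ℕ) (ht : t < p ^ d) :
    rev p (n + d) (p ^ d * c + rev p d t) = rev p n c + p ^ n * t := by
  have h := rev_shift hp d n (rev p d t) c (rev_lt hp d t)
  rw [add_comm n d, show p ^ d * c + rev p d t = rev p d t + c * p ^ d from by ring, h,
    rev_rev hp d t ht]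

end Digits

lemma psiOut_shift (p : ℕ) [hp : Fact p.Prime] (n d : ℕ) (z : ℤ_[p]) (a : ℕ)
    (ha : a < p ^ n) (m : ℤ_[p] × ℤ_[p]) :
    psiOut p (n + d) z (a * p ^ d) m = psiOut p n z a m := by
  have hp0 : 0 < p := hp.out.pos
  have hpn : 0 < p ^ n := pow_pos hp0 n
  have hpd : 0 < p ^ d := pow_pos hp0 d
  have hble : m.2.appr n ≤ m.2.appr (n + d) :=
    PadicInt.appr_mono m.2 (Nat.le_add_right n d)
  obtain ⟨t, ht⟩ := PadicInt.dvd_appr_sub_appr m.2 n (n + d) (Nat.le_add_right n d)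
  rw [mul_comm] at ht
  have hblt : m.2.appr n < p ^ n := PadicInt.appr_lt m.2 n
  have hb'lt : m.2.appr (n + d) < p ^ (n + d) := PadicInt.appr_lt m.2 (n + d)
  have hb' : m.2.appr (n + d) = m.2.appr n + t * p ^ n := by omega
  have htlt : t < p ^ d := by
    by_contra hcon
    push_neg at hcon
    have h1 : p ^ d * p ^ n ≤ t * p ^ n := Nat.mul_le_mul_right _ hcon
    rw [← pow_add, add_comm d n] at h1
    omega
  have hrev : rev p (n + d) (m.2.appr (n + d)) =
      rev p d t + p ^ d * rev p n (m.2.appr n) := by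
    rw [hb']; exact rev_shift hp0 n d _ t hblt
  have hrlt : rev p d t < p ^ d := rev_lt hp0 d t
  have hc' : a * p ^ d + rev p (n + d) (m.2.appr (n + d)) =
      p ^ d * (a + rev p n (m.2.appr n)) + rev p d t := by rw [hrev]; ring
  have hiff : p ^ d * (a + rev p n (m.2.appr n)) + rev p d t < p ^ (n + d) ↔
      a + rev p n (m.2.appr n) < p ^ n := by
    rw [pow_add]
    constructor
    · intro h
      by_contra hcc
      push_neg at hcc
      have h2 : p ^ n * p ^ d ≤ p ^ d * (a + rev p n (m.2.appr n)) := by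
        rw [mul_comm]; exact Nat.mul_le_mul_left _ hcc
      omega
    · intro h
      calc p ^ d * (a + rev p n (m.2.appr n)) + rev p d t
          < p ^ d * (a + rev p n (m.2.appr n)) + p ^ d := by omega
        _ = p ^ d * (a + rev p n (m.2.appr n) + 1) := by ring
        _ ≤ p ^ d * p ^ n := Nat.mul_le_mul_left _ h
        _ = p ^ n * p ^ d := by ring
  simp only [psiOut]
  rw [hc']
  by_cases hcase : a + rev p n (m.2.appr n) < p ^ n
  · rw [if_pos (hiff.mpr hcase), if_pos hcase,
      rev_key hp0 n d (a + rev p n (m.2.appr n)) t htlt]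
    refine Prod.ext rfl ?_
    simp only [hb']
    push_cast
    ring
  · rw [if_neg (fun h => hcase (hiff.mp h)), if_neg hcase]
    have hle : p ^ n ≤ a + rev p n (m.2.appr n) := le_of_not_gt hcase
    have h1 : p ^ d * (a + rev p n (m.2.appr n) - p ^ n) + p ^ d * p ^ n
        = p ^ d * (a + rev p n (m.2.appr n)) := by
      rw [← Nat.mul_add, Nat.sub_add_cancel hle]
    have h2 : p ^ d * p ^ n = p ^ n * p ^ d := mul_comm _ _
    have hsub : p ^ d * (a + rev p n (m.2.appr n)) + rev p d t - p ^ (n + d)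
        = p ^ d * (a + rev p n (m.2.appr n) - p ^ n) + rev p d t := by
      rw [pow_add]; omega
    rw [hsub, rev_key hp0 n d (a + rev p n (m.2.appr n) - p ^ n) t htlt]
    refine Prod.ext rfl ?_
    simp only [hb']
    push_cast
    ring

/-- Well-definedness of the digit-reversal action: the output does not depend on
the choice of `n` in the decomposition `g = ⌊g⌋ + a/p^n`. -/
theorem psiOut_well_defined (p : ℕ) [Fact p.Prime] (g : ℚ_[p]) (n n' : ℕ)
    (z z' : ℤ_[p]) (a a' : ℕ) (ha : a < p ^ n) (ha' : a' < p ^ n')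
    (hg : g = (z : ℚ_[p]) + (a : ℚ_[p]) / (p : ℚ_[p]) ^ n)
    (hg' : g = (z' : ℚ_[p]) + (a' : ℚ_[p]) / (p : ℚ_[p]) ^ n')
    (m : ℤ_[p] × ℤ_[p]) :
    psiOut p n z a m = psiOut p n' z' a' m := by
  wlog hnn : n ≤ n' generalizing n n' z z' a a' with H
  · exact (H n' n z' z a' a ha' ha hg' hg (le_of_not_ge hnn)).symm
  obtain ⟨d, rfl⟩ := Nat.exists_eq_add_of_le hnn
  have hpQ : (p : ℚ_[p]) ≠ 0 := Nat.cast_ne_zero.mpr (Fact.out : p.Prime).ne_zero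
  have h := hg.symm.trans hg'
  have hQ : ((z - z' : ℤ_[p]) : ℚ_[p]) * (p : ℚ_[p]) ^ (n + d)
      = (((a' : ℤ) - (a : ℤ) * (p : ℤ) ^ d : ℤ) : ℚ_[p]) := by
    field_simp at h
    push_cast
    apply mul_left_cancel₀ (pow_ne_zero n hpQ)
    linear_combination h
  have hZ : ((z - z') * (p : ℤ_[p]) ^ (n + d) : ℤ_[p])
      = (((a' : ℤ) - (a : ℤ) * (p : ℤ) ^ d : ℤ) : ℤ_[p]) := by
    apply Subtype.coe_injective
    push_cast
    exact_mod_cast hQ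
  have hdvd : ((p : ℤ) ^ (n + d)) ∣ ((a' : ℤ) - (a : ℤ) * (p : ℤ) ^ d) := by
    rw [← PadicInt.norm_int_le_pow_iff_dvd, ← hZ]
    calc ‖(z - z') * (p : ℤ_[p]) ^ (n + d)‖
        = ‖z - z'‖ * ‖(p : ℤ_[p]) ^ (n + d)‖ := norm_mul _ _
      _ ≤ 1 * (p : ℝ) ^ (-(n + d : ℕ) : ℤ) := by
          rw [PadicInt.norm_p_pow]
          exact mul_le_mul_of_nonneg_right (PadicInt.norm_le_one _) (by positivity)
      _ = (p : ℝ) ^ (-(n + d : ℕ) : ℤ) := one_mul _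
  have habs : (a' : ℤ) - (a : ℤ) * (p : ℤ) ^ d = 0 := by
    apply Int.eq_zero_of_abs_lt_dvd hdvd
    have h1 : (a' : ℤ) < (p : ℤ) ^ (n + d) := by exact_mod_cast ha'
    have h2 : (a : ℤ) * (p : ℤ) ^ d < (p : ℤ) ^ (n + d) := by
      have h3 : a * p ^ d < p ^ n * p ^ d :=
        Nat.mul_lt_mul_of_lt_of_le ha le_rfl (pow_pos (Fact.out : p.Prime).pos d)
      rw [← pow_add] at h3
      exact_mod_cast h3
    have h3 : (0 : ℤ) ≤ (a' : ℤ) := Int.ofNat_nonneg _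
    have h4 : (0 : ℤ) ≤ (a : ℤ) * (p : ℤ) ^ d := by positivity
    rw [abs_lt]
    constructor <;> linarith
  have ha'eq : a' = a * p ^ d := by
    have := sub_eq_zero.mp habs
    exact_mod_cast this
  have hz : z = z' := by
    have h5 : (z - z') * (p : ℤ_[p]) ^ (n + d) = 0 := by
      rw [hZ, habs, Int.cast_zero]
    have h6 : ((p : ℤ_[p])) ^ (n + d) ≠ 0 :=
      pow_ne_zero _ (Nat.cast_ne_zero.mpr (Fact.out : p.Prime).ne_zero)
    exact sub_eq_zero.mp ((mul_eq_zero.mp h5).resolve_right h6)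
  rw [← hz, ha'eq]
  exact (psiOut_shift p n d z a ha m).symm
end

section
/- The digit-reversal action ψ of (ℚ_p,+) on ℤ_p² is not proper: there exists a sequence g_k ∈ ℚ_p with no convergent subsequence and a point m ∈ ℤ_p² such that ψ(g_k, m) converges in ℤ_p². Concretely, ψ(p^{-n},(0,0)) = (0, p^{n−1}) for all n ≥ 1, p^{n−1} → 0, while (p^{-n})_n has no convergent subsequence in ℚ_p. -/
open scoped Classical

open Filter

lemma appr_zero' (p : ℕ) [Fact p.Prime] (n : ℕ) : (0 : ℤ_[p]).appr n = 0 := by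
  induction n with
  | zero => rfl
  | succ n ih => simp [PadicInt.appr, ih]

lemma rev_zero (p n : ℕ) : rev p n 0 = 0 := by simp [rev]

lemma rev_pow (p : ℕ) (hp : 2 ≤ p) {n j : ℕ} (hj : j < n) :
    rev p n (p ^ j) = p ^ (n - 1 - j) := by
  unfold rev
  rw [Finset.sum_eq_single (n - 1 - j)]
  · have h1 : n - 1 - (n - 1 - j) = j := by omega
    rw [h1, Nat.div_self (pow_pos (by omega : 0 < p) j), Nat.one_mod_eq_one.mpr (by omega),
      one_mul]
  · intro i hi hne
    rcases lt_or_ge j (n - 1 - i) with h | h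
    · rw [Nat.div_eq_of_lt (Nat.pow_lt_pow_right (by omega) h), Nat.zero_mod, zero_mul]
    · have hlt : n - 1 - i < j := by
        simp only [Finset.mem_range] at hi; omega
      rw [Nat.pow_div h (by omega)]
      have : j - (n - 1 - i) = (j - (n - 1 - i) - 1) + 1 := by omega
      rw [this, pow_succ, Nat.mul_mod_left, zero_mul]
  · intro h
    exact absurd (Finset.mem_range.mpr (by omega)) h

lemma decomp (p : ℕ) [hp : Fact p.Prime] {n n' : ℕ} (hn : 1 ≤ n) {z : ℤ_[p]} {a : ℕ}
    (ha : a < p ^ n')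
    (heq : (p : ℚ_[p]) ^ (-(n : ℤ)) = (z : ℚ_[p]) + (a : ℚ_[p]) / (p : ℚ_[p]) ^ n') :
    n ≤ n' ∧ z = 0 ∧ a = p ^ (n' - n) := by
  have hp1 : 1 < p := hp.out.one_lt
  have hp0 : (p : ℚ_[p]) ≠ 0 := Nat.cast_ne_zero.mpr hp.out.pos.ne'
  have E : (p : ℚ_[p]) ^ ((n' : ℤ) - n) = (p : ℚ_[p]) ^ n' * z + a := by
    rw [sub_eq_add_neg, zpow_add₀ hp0, zpow_natCast, heq]
    field_simp
  have hrhs : ‖(p : ℚ_[p]) ^ n' * (z : ℚ_[p]) + a‖ ≤ 1 := by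
    have : ((p : ℚ_[p]) ^ n' * z + a) = (((p : ℤ_[p]) ^ n' * z + a : ℤ_[p]) : ℚ_[p]) := by
      push_cast; ring
    rw [this, ← PadicInt.norm_def]
    exact PadicInt.norm_le_one _
  have hle : n ≤ n' := by
    by_contra h
    push_neg at h
    have h1 : ‖(p : ℚ_[p]) ^ ((n' : ℤ) - n)‖ = (p : ℝ) ^ ((n : ℤ) - n') := by
      rw [Padic.norm_p_zpow]; ring_nf
    have h2 : ((n : ℤ) - n') = ((n - n' : ℕ) : ℤ) := by omega
    rw [E] at h1
    rw [h1, h2, zpow_natCast] at hrhs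
    have : (1 : ℝ) < (p : ℝ) ^ (n - n') := by
      apply one_lt_pow₀ (by exact_mod_cast hp1) (by omega)
    linarith
  have h2 : ((n' : ℤ) - n) = ((n' - n : ℕ) : ℤ) := by omega
  rw [h2, zpow_natCast] at E
  have key : ((a : ℤ) - p ^ (n' - n) : ℚ_[p]) = -((p : ℚ_[p]) ^ n' * z) := by
    push_cast
    linear_combination -E
  have hdvd : ((p : ℤ) ^ n' : ℤ) ∣ ((a : ℤ) - p ^ (n' - n)) := by
    rw [← Padic.norm_int_le_pow_iff_dvd]
    have hcast : (((a : ℤ) - p ^ (n' - n) : ℤ) : ℚ_[p]) = ((a : ℤ) - p ^ (n' - n) : ℚ_[p]) := by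
      push_cast; ring
    rw [hcast, key]
    rw [norm_neg, norm_mul, Padic.norm_p_pow]
    calc (p:ℝ) ^ (-(n':ℤ)) * ‖(z : ℚ_[p])‖ ≤ (p:ℝ) ^ (-(n':ℤ)) * 1 := by
          apply mul_le_mul_of_nonneg_left (PadicInt.norm_le_one z) (by positivity)
      _ = (p:ℝ) ^ (-(n':ℤ)) := mul_one _
  have habs : |(a : ℤ) - p ^ (n' - n)| < (p : ℤ) ^ n' := by
    have h1 : (p : ℤ) ^ (n' - n) < (p : ℤ) ^ n' := by
      exact_mod_cast Nat.pow_lt_pow_right hp1 (by omega)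
    have h2 : (0 : ℤ) < (p : ℤ) ^ (n' - n) := by positivity
    have h3 : (a : ℤ) < (p : ℤ) ^ n' := by exact_mod_cast ha
    rw [abs_lt]; omega
  have ha' : (a : ℤ) = p ^ (n' - n) := by
    have := Int.eq_zero_of_abs_lt_dvd hdvd habs
    omega
  have haa : a = p ^ (n' - n) := by exact_mod_cast ha'
  refine ⟨hle, ?_, haa⟩
  have hz : (p : ℚ_[p]) ^ n' * z = 0 := by
    rw [haa] at E
    push_cast at E
    linear_combination -E
  have : (z : ℚ_[p]) = 0 := by
    rcases mul_eq_zero.mp hz with h | h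
    · exact absurd h (pow_ne_zero _ hp0)
    · exact h
  exact Subtype.coe_injective (by exact_mod_cast this)

/-- The digit-reversal action is not proper: `ψ(p^{-n},(0,0)) = (0, p^{n-1})` converges to
`(0,0)` while `(p^{-n})_n` has no convergent subsequence in `ℚ_p`. -/
theorem psi_not_proper (p : ℕ) [Fact p.Prime] :
    (∀ n : ℕ, 1 ≤ n →
      psi p ((p : ℚ_[p]) ^ (-(n : ℤ))) (0, 0) = (0, (p : ℤ_[p]) ^ (n - 1))) ∧
    Tendsto (fun n : ℕ => ((p : ℤ_[p]) ^ (n - 1) : ℤ_[p])) atTop (nhds 0) ∧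
    (∀ φ : ℕ → ℕ, StrictMono φ →
      ¬ ∃ L : ℚ_[p], Tendsto (fun k : ℕ => (p : ℚ_[p]) ^ (-(φ k : ℤ))) atTop (nhds L)) := by
  have hp1 : 1 < p := (Fact.out : p.Prime).one_lt
  refine ⟨?_, ?_, ?_⟩
  · intro n hn
    have hex : ∃ n₁ : ℕ, ∃ z : ℤ_[p], ∃ a : ℕ, a < p ^ n₁ ∧
        (p : ℚ_[p]) ^ (-(n : ℤ)) = (z : ℚ_[p]) + (a : ℚ_[p]) / (p : ℚ_[p]) ^ n₁ := by
      refine ⟨n, 0, 1, Nat.one_lt_pow (by omega) hp1, ?_⟩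
      simp [zpow_neg, zpow_natCast, one_div]
    unfold psi
    rw [dif_pos hex]
    obtain ⟨ha, heq⟩ := hex.choose_spec.choose_spec.choose_spec
    obtain ⟨hle, hz0, ha'⟩ := decomp p hn ha heq
    set A := hex.choose_spec.choose_spec.choose with hA
    set Z := hex.choose_spec.choose with hZ
    set N := hex.choose with hN
    clear_value A Z N
    clear ha heq hA hZ hN
    subst hz0 ha'
    unfold psiOut
    simp only [appr_zero', rev_zero, Nat.add_zero, Nat.cast_zero]
    rw [if_pos (Nat.pow_lt_pow_right hp1 (by omega))]
    rw [rev_pow p (by omega) (show N - n < N by omega)]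
    have : N - 1 - (N - n) = n - 1 := by omega
    rw [this]
    simp
  · have h0 : Tendsto (fun k : ℕ => (p : ℤ_[p]) ^ k) atTop (nhds 0) := by
      apply tendsto_pow_atTop_nhds_zero_of_norm_lt_one
      rw [PadicInt.norm_p]
      rw [inv_lt_one_iff₀]
      right; exact_mod_cast hp1
    exact h0.comp (tendsto_sub_atTop_nat 1)
  · rintro φ hφ ⟨L, hL⟩
    have hnorm : Tendsto (fun k : ℕ => ‖(p : ℚ_[p]) ^ (-(φ k : ℤ))‖) atTop (nhds ‖L‖) :=
      hL.norm
    have heq : (fun k : ℕ => ‖(p : ℚ_[p]) ^ (-(φ k : ℤ))‖) = fun k : ℕ => (p : ℝ) ^ (φ k) := by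
      funext k
      rw [Padic.norm_p_zpow, neg_neg, zpow_natCast]
    rw [heq] at hnorm
    have hatTop : Tendsto (fun k : ℕ => (p : ℝ) ^ (φ k)) atTop atTop :=
      (tendsto_pow_atTop_atTop_of_one_lt (by exact_mod_cast hp1)).comp hφ.tendsto_atTop
    exact not_tendsto_nhds_of_tendsto_atTop hatTop _ hnorm
end
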